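/- The Dehn tribracket of a group G, with operation [x,y,z] = y x⁻¹ z, is entropic if and only if G is abelian. -/

import Mathlib

def dehnBr {G : Type*} [Group G] (x y z : G) : G := y * x⁻¹ * z

def IsEntropic {X : Type*} (op : X → X → X → X) : Prop :=
  ∀ x y z u v w a b c : X,
    op (op x y z) (op u v w) (op a b c) = op (op x u a) (op y v b) (op z w c)

section

variable {G : Type*}

@[simp]
lemma dehnBr_one_left [Group G] (y z : G) : dehnBr 1 y z = y * z := by
  simp [dehnBr]

@[simp]
lemma dehnBr_one_right [Group G] (x y : G) : dehnBr x y 1 = y * x⁻¹ := by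
  simp [dehnBr]

lemma isEntropic_dehnBr [CommGroup G] : IsEntropic (dehnBr (G := G)) := by
  intro x y z u v w a b c
  simp only [dehnBr, mul_inv_rev, inv_inv]
  simp only [mul_comm, mul_left_comm, mul_assoc]

/-- Take `u = g⁻¹`, `b = k` and all other variables `1` in the entropic law. -/
lemma IsEntropic.dehnBr_mul_comm [Group G] (h : IsEntropic (dehnBr (G := G))) (g k : G) :
    g * k = k * g := by
  simpa using h 1 1 1 g⁻¹ 1 1 1 k 1

end

theorem dehn_entropic_iff_abelian {G : Type*} [Group G] :
    (∀ x y z u v w a b c : G,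
        dehnBr (dehnBr x y z) (dehnBr u v w) (dehnBr a b c) =
          dehnBr (dehnBr x u a) (dehnBr y v b) (dehnBr z w c)) ↔
      ∀ g h : G, g * h = h * g := by
  refine ⟨IsEntropic.dehnBr_mul_comm, fun hcomm => ?_⟩
  let _ : CommGroup G := { mul_comm := hcomm }
  exact isEntropic_dehnBr
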